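/- arXiv:2605.15795 — 3 statements merged into one kernel-verified Lean document; each statement's English description precedes it below -/
import Mathlib

section
/- Let α, β ∈ (0,1) and q ∈ (0,1]. The probability vector π = (π00, π01, π10, π11) with π01 = π10 = αβ(1-q)/((α+β)((α+β) - q(α+β-1))), π00 = β/(α+β) - π01, π11 = α/(α+β) - π10 is a stationary distribution of the 4×4 Markov transition matrix T with rows: (1-α, 0, α(1-q), αq), (q(1-α), (1-α)(1-q), 0, α), (β, 0, (1-β)(1-q), q(1-β)), (βq, β(1-q), 0, 1-β), i.e., πT = π and the entries of π sum to 1 and are nonnegative. -/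
theorem stmt_0 (α β q : ℝ) (hα : α ∈ Set.Ioo (0:ℝ) 1) (hβ : β ∈ Set.Ioo (0:ℝ) 1)
    (hq : q ∈ Set.Ioc (0:ℝ) 1)
    (T : Matrix (Fin 4) (Fin 4) ℝ)
    (hT : T = !![1-α, 0, α*(1-q), α*q;
                 q*(1-α), (1-α)*(1-q), 0, α;
                 β, 0, (1-β)*(1-q), q*(1-β);
                 β*q, β*(1-q), 0, 1-β])
    (π : Fin 4 → ℝ)
    (hπ01 : π 1 = α*β*(1-q) / ((α+β) * ((α+β) - q*(α+β-1))))
    (hπ10 : π 2 = α*β*(1-q) / ((α+β) * ((α+β) - q*(α+β-1))))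
    (hπ00 : π 0 = β/(α+β) - π 1)
    (hπ11 : π 3 = α/(α+β) - π 2) :
    Matrix.vecMul π T = π ∧ (∑ i, π i) = 1 ∧ ∀ i, 0 ≤ π i := by
  obtain ⟨ha0, ha1⟩ := hα
  obtain ⟨hb0, hb1⟩ := hβ
  obtain ⟨hq0, hq1⟩ := hq
  have hs : (0:ℝ) < α + β := by linarith
  have hD : (0:ℝ) < (α+β) - q*(α+β-1) := by nlinarith
  have hsne : (α + β) ≠ 0 := hs.ne'
  have hDne : (α+β) - q*(α+β-1) ≠ 0 := hD.ne'
  refine ⟨?_, ?_, ?_⟩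
  · funext i
    fin_cases i <;>
      simp [hT, Matrix.vecMul, dotProduct, Fin.sum_univ_four, hπ00, hπ11, hπ01, hπ10] <;>
      field_simp <;> ring
  · simp [Fin.sum_univ_four, hπ00, hπ11, hπ01, hπ10]
    field_simp
    ring
  · intro i
    have h1 : 0 ≤ π 1 := by
      rw [hπ01]
      exact div_nonneg (mul_nonneg (mul_nonneg ha0.le hb0.le) (by linarith)) (by positivity)
    have h2 : 0 ≤ π 2 := by rwa [hπ10, ← hπ01]
    have hle : α*β*(1-q) / ((α+β) * ((α+β) - q*(α+β-1))) ≤ β/(α+β) := by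
      rw [div_le_div_iff₀ (by positivity) hs]
      nlinarith [mul_pos hb0 hq0, mul_nonneg (mul_nonneg hb0.le hb0.le) (by linarith : (0:ℝ) ≤ 1-q)]
    have hle2 : α*β*(1-q) / ((α+β) * ((α+β) - q*(α+β-1))) ≤ α/(α+β) := by
      rw [div_le_div_iff₀ (by positivity) hs]
      nlinarith [mul_pos ha0 hq0, mul_nonneg (mul_nonneg ha0.le ha0.le) (by linarith : (0:ℝ) ≤ 1-q)]
    have h0 : 0 ≤ π 0 := by rw [hπ00, hπ01]; linarith
    have h3 : 0 ≤ π 3 := by rw [hπ11, hπ10]; linarith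
    fin_cases i
    · exact h0
    · exact h1
    · exact h2
    · exact h3
end

section
/- Let α, β ∈ (0,1) and q ∈ (0,1], and let π be any probability vector satisfying π = πT for the 4×4 matrix T with rows (1-α, 0, α(1-q), αq), (q(1-α), (1-α)(1-q), 0, α), (β, 0, (1-β)(1-q), q(1-β)), (βq, β(1-q), 0, 1-β), whose marginals satisfy π(0,0)+π(0,1) = β/(α+β) and π(1,0)+π(1,1) = α/(α+β). Then the two mismatch probabilities are equal: π(0,1) = π(1,0). -/
theorem stmt_1 (α β q : ℝ) (hα : α ∈ Set.Ioo (0:ℝ) 1) (hβ : β ∈ Set.Ioo (0:ℝ) 1)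
    (hq : q ∈ Set.Ioc (0:ℝ) 1)
    (T : Matrix (Fin 4) (Fin 4) ℝ)
    (hT : T = !![1-α, 0, α*(1-q), α*q;
                 q*(1-α), (1-α)*(1-q), 0, α;
                 β, 0, (1-β)*(1-q), q*(1-β);
                 β*q, β*(1-q), 0, 1-β])
    (π : Fin 4 → ℝ)
    (hnn : ∀ i, 0 ≤ π i) (hsum : (∑ i, π i) = 1)
    (hstat : Matrix.vecMul π T = π)
    (hm0 : π 0 + π 1 = β/(α+β))
    (hm1 : π 2 + π 3 = α/(α+β)) :
    π 1 = π 2 := by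
  subst hT
  have e1 := congrFun hstat 1
  have e2 := congrFun hstat 2
  simp [Matrix.vecMul, dotProduct, Fin.sum_univ_four, Matrix.cons_val_zero,
    Matrix.cons_val_one, Matrix.head_cons] at e1 e2
  have hq0 : q ≠ 0 := ne_of_gt hq.1
  have key : q * π 1 = q * π 2 := by
    linear_combination e2 - e1 - α*(1-q)*hm0 + β*(1-q)*hm1
  exact mul_left_cancel₀ hq0 key
end

section
/- Let α1, β1, α2, β2 ∈ (0,1) with α1+β1 ≥ 1 and α2+β2 ≥ 1, let w1, w2 ≥ 0, and let q1(a1,a2), q2(a1,a2) be the bilinear effective update probabilities of the MPR model with parameters p11, p22, p112, p221 ∈ [0,1]. Define E(a1,a2) = w1·E1(q1(a1,a2)) + w2·E2(q2(a1,a2)), where Ei(q) = 2αiβi(1-q)/((αi+βi)((αi+βi) - q(αi+βi-1))). Then for budgets Γ1, Γ2 ∈ (0,1], the minimum of E over 𝒫(Γ1)×𝒫(Γ2) is attained at some pair of vertices (v1, v2) ∈ V1 × V2, where Vk = {(1,0,0), (1-Γk, Γk, 0), (1-Γk, 0, Γk)}. -/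
/-!
With `u = 1 - q` and `s = αᵢ + βᵢ`, `Eᵢ` is a nonnegative multiple of `u / (1 + (s - 1) u)`,
which is concave for `u ≥ 0`, so `Eᵢ` is concave on `q ≤ 1`. Each `qᵢ(a₁, a₂) = a₁ ⬝ Mᵢ a₂` is a
bilinear form whose matrix has entries at most `1`, so on probability vectors it stays `≤ 1` and
`E` is concave in each policy separately. `𝒫(Γ)` is the convex hull of `V(Γ)`, and a concave
function on a convex hull is minimised at a generating point: moving first `a₁`, then `a₂`, to a
vertex never increases `E`, so the minimum over the finitely many vertex pairs is a global minimum.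
-/

open Set Matrix

lemma concaveOn_Iic_one_mul_one_sub_div {c s : ℝ} (hc : 0 ≤ c) (hs : 1 ≤ s) :
    ConcaveOn ℝ (Iic 1) fun q => c * (1 - q) / (s * (s - q * (s - 1))) := by
  refine ⟨convex_Iic 1, fun x (hx : x ≤ 1) y (hy : y ≤ 1) a b ha hb hab => ?_⟩
  obtain rfl : b = 1 - a := by linarith
  have hD : ∀ q ≤ (1 : ℝ), 0 < s * (s - q * (s - 1)) := fun q hq =>
    mul_pos (by linarith) (by nlinarith [mul_nonneg (sub_nonneg.2 hq) (sub_nonneg.2 hs)])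
  simp only [smul_eq_mul]
  rw [← mul_div_assoc, ← mul_div_assoc, div_add_div _ _ (hD x hx).ne' (hD y hy).ne',
    div_le_div_iff₀ (mul_pos (hD x hx) (hD y hy)) (hD _ (by nlinarith))]
  -- after clearing denominators the Jensen gap is exactly `c s² a (1 - a) (s - 1) (x - y)²`
  linear_combination (mul_nonneg (mul_nonneg (mul_nonneg (mul_nonneg hc (sq_nonneg s)) ha) hb)
    (mul_nonneg (sub_nonneg.mpr hs) (sq_nonneg (x - y))))

section stdSimplex

variable {ι : Type*} [Fintype ι]

lemma dotProduct_le_one_of_mem_stdSimplex {c x : ι → ℝ} (hc : ∀ i, c i ≤ 1)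
    (hx : x ∈ stdSimplex ℝ ι) : c ⬝ᵥ x ≤ 1 :=
  calc c ⬝ᵥ x = ∑ i, c i * x i := rfl
    _ ≤ ∑ i, x i := Finset.sum_le_sum fun i _ => mul_le_of_le_one_left (hx.1 i) (hc i)
    _ = 1 := hx.2

lemma ConcaveOn.comp_dotProduct_stdSimplex {φ : ℝ → ℝ} (hφ : ConcaveOn ℝ (Iic 1) φ)
    {c : ι → ℝ} (hc : ∀ i, c i ≤ 1) : ConcaveOn ℝ (stdSimplex ℝ ι) fun x => φ (c ⬝ᵥ x) :=
  (hφ.comp_linearMap (dotProductBilin ℝ ℝ c)).subset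
    (fun _ hx => dotProduct_le_one_of_mem_stdSimplex hc hx) (convex_stdSimplex ℝ ι)

variable {κ : Type*} [Fintype κ]

lemma ConcaveOn.comp_dotProduct_mulVec_left {φ : ℝ → ℝ} (hφ : ConcaveOn ℝ (Iic 1) φ)
    {M : Matrix ι κ ℝ} (hM : ∀ i j, M i j ≤ 1) {y : κ → ℝ} (hy : y ∈ stdSimplex ℝ κ) :
    ConcaveOn ℝ (stdSimplex ℝ ι) fun x => φ (x ⬝ᵥ M *ᵥ y) := by
  simp_rw [dotProduct_comm _ (M *ᵥ y)]
  exact hφ.comp_dotProduct_stdSimplex fun i => dotProduct_le_one_of_mem_stdSimplex (hM i) hy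

lemma ConcaveOn.comp_dotProduct_mulVec_right {φ : ℝ → ℝ} (hφ : ConcaveOn ℝ (Iic 1) φ)
    {M : Matrix ι κ ℝ} (hM : ∀ i j, M i j ≤ 1) {x : ι → ℝ} (hx : x ∈ stdSimplex ℝ ι) :
    ConcaveOn ℝ (stdSimplex ℝ κ) fun y => φ (x ⬝ᵥ M *ᵥ y) := by
  simp_rw [dotProduct_mulVec]
  refine hφ.comp_dotProduct_stdSimplex fun j => ?_
  rw [vecMul, dotProduct_comm]
  exact dotProduct_le_one_of_mem_stdSimplex (fun i => hM i j) hx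

end stdSimplex

section convexHull

variable {E F : Type*} [AddCommGroup E] [Module ℝ E] [AddCommGroup F] [Module ℝ F]

lemma exists_le_of_concaveOn_convexHull_prod {s : Set E} {t : Set F} (hs : s.Finite)
    (ht : t.Finite) (hs₀ : s.Nonempty) (ht₀ : t.Nonempty) {f : E → F → ℝ}
    (hfst : ∀ y ∈ convexHull ℝ t, ConcaveOn ℝ (convexHull ℝ s) (f · y))
    (hsnd : ∀ x ∈ s, ConcaveOn ℝ (convexHull ℝ t) (f x)) :
    ∃ x₀ ∈ s, ∃ y₀ ∈ t, ∀ x ∈ convexHull ℝ s, ∀ y ∈ convexHull ℝ t, f x₀ y₀ ≤ f x y := by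
  obtain ⟨⟨x₀, y₀⟩, ⟨hx₀, hy₀⟩, hmin⟩ :=
    (s ×ˢ t).exists_min_image (Function.uncurry f) (hs.prod ht) (hs₀.prod ht₀)
  refine ⟨x₀, hx₀, y₀, hy₀, fun x hx y hy => ?_⟩
  obtain ⟨x', hx', hfx⟩ := (hfst y hy).exists_le_of_mem_convexHull (subset_convexHull ℝ s) hx
  obtain ⟨y', hy', hfy⟩ := (hsnd x' hx').exists_le_of_mem_convexHull (subset_convexHull ℝ t) hy
  exact (hmin (x', y') ⟨hx', hy'⟩).trans (hfy.trans hfx)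

end convexHull

def policySimplex (Γ : ℝ) : Set (Fin 3 → ℝ) :=
  {a | 0 ≤ a 0 ∧ 0 ≤ a 1 ∧ 0 ≤ a 2 ∧ a 0 + a 1 + a 2 = 1 ∧ a 1 + a 2 ≤ Γ}

def policyVertices (Γ : ℝ) : Set (Fin 3 → ℝ) :=
  {![1, 0, 0], ![1 - Γ, Γ, 0], ![1 - Γ, 0, Γ]}

lemma policySimplex_subset_convexHull {Γ : ℝ} (hΓ : 0 < Γ) :
    policySimplex Γ ⊆ convexHull ℝ (policyVertices Γ) := by
  rintro a ⟨-, h1, h2, hsum, hΓa⟩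
  let w : Fin 3 → ℝ := ![1 - (a 1 + a 2) / Γ, a 1 / Γ, a 2 / Γ]
  let v : Fin 3 → Fin 3 → ℝ := ![![1, 0, 0], ![1 - Γ, Γ, 0], ![1 - Γ, 0, Γ]]
  have hw : ∀ i, 0 ≤ w i := by
    intro i
    fin_cases i
    exacts [sub_nonneg.2 ((div_le_one hΓ).2 hΓa), div_nonneg h1 hΓ.le, div_nonneg h2 hΓ.le]
  have hw₁ : ∑ i, w i = 1 := by
    simp only [w, Fin.sum_univ_three, cons_val_zero, cons_val_one, cons_val]
    ring
  have hv : ∀ i, v i ∈ policyVertices Γ := by intro i; fin_cases i <;> simp [v, policyVertices]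
  have ha : a = ∑ i, w i • v i := by
    ext k
    fin_cases k <;>
      simp only [w, v, Finset.sum_apply, Pi.smul_apply, smul_eq_mul, Fin.sum_univ_three, cons_val',
        cons_val_fin_one, cons_val_zero, cons_val_one, cons_val, Fin.zero_eta, Fin.mk_one,
        Fin.reduceFinMk, Fin.isValue] <;>
      field_simp
    · linear_combination Γ * hsum
    · ring
    · ring
  exact ha ▸ (convex_convexHull ℝ _).sum_mem (fun i _ => hw i) hw₁
    (fun i _ => subset_convexHull ℝ _ (hv i))

lemma convexHull_policyVertices_subset_stdSimplex {Γ : ℝ} (hΓ : Γ ∈ Icc 0 1) :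
    convexHull ℝ (policyVertices Γ) ⊆ stdSimplex ℝ (Fin 3) := by
  refine convexHull_min ?_ (convex_stdSimplex ℝ _)
  simp only [policyVertices, insert_subset_iff, singleton_subset_iff]
  refine ⟨⟨?_, ?_⟩, ⟨?_, ?_⟩, ⟨?_, ?_⟩⟩ <;>
    simp [Fin.forall_fin_succ, Fin.sum_univ_three, hΓ.1, hΓ.2]

section updateMatrix

variable (p11 p22 p112 p221 : ℝ)

def updateMatrix₁ : Matrix (Fin 3) (Fin 3) ℝ :=
  !![0, p22, 0; p11, 1 - (1 - p112) * (1 - p221), p112; 0, p221, 0]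

def updateMatrix₂ : Matrix (Fin 3) (Fin 3) ℝ :=
  !![0, 0, p22; 0, 0, p221; p11, p112, 1 - (1 - p112) * (1 - p221)]

lemma dotProduct_updateMatrix₁_mulVec (a1 a2 : Fin 3 → ℝ) :
    a1 ⬝ᵥ updateMatrix₁ p11 p22 p112 p221 *ᵥ a2 = a1 1 * a2 0 * p11 + a1 0 * a2 1 * p22
      + a1 1 * a2 1 * (1 - (1 - p112) * (1 - p221)) + a1 1 * a2 2 * p112 + a1 2 * a2 1 * p221 := by
  simp only [updateMatrix₁, dotProduct, mulVec, of_apply, cons_val', cons_val_fin_one,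
    Fin.sum_univ_three, cons_val_zero, cons_val_one, cons_val]
  ring

lemma dotProduct_updateMatrix₂_mulVec (a1 a2 : Fin 3 → ℝ) :
    a1 ⬝ᵥ updateMatrix₂ p11 p22 p112 p221 *ᵥ a2 = a1 2 * a2 0 * p11 + a1 0 * a2 2 * p22
      + a1 2 * a2 2 * (1 - (1 - p112) * (1 - p221)) + a1 2 * a2 1 * p112 + a1 1 * a2 2 * p221 := by
  simp only [updateMatrix₂, dotProduct, mulVec, of_apply, cons_val', cons_val_fin_one,
    Fin.sum_univ_three, cons_val_zero, cons_val_one, cons_val]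
  ring

variable {p11 p22 p112 p221}

lemma updateMatrix_apply_le_one (h11 : p11 ≤ 1) (h22 : p22 ≤ 1) (h112 : p112 ≤ 1)
    (h221 : p221 ≤ 1) (i j : Fin 3) :
    updateMatrix₁ p11 p22 p112 p221 i j ≤ 1 ∧ updateMatrix₂ p11 p22 p112 p221 i j ≤ 1 := by
  have hr : 1 - (1 - p112) * (1 - p221) ≤ 1 :=
    sub_le_self _ (mul_nonneg (sub_nonneg.2 h112) (sub_nonneg.2 h221))
  fin_cases i <;> fin_cases j <;> simp [updateMatrix₁, updateMatrix₂, *]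

end updateMatrix

theorem stmt_12 (α1 β1 α2 β2 w1 w2 p11 p22 p112 p221 Γ1 Γ2 : ℝ)
    (hα1 : α1 ∈ Set.Ioo (0:ℝ) 1) (hβ1 : β1 ∈ Set.Ioo (0:ℝ) 1)
    (hα2 : α2 ∈ Set.Ioo (0:ℝ) 1) (hβ2 : β2 ∈ Set.Ioo (0:ℝ) 1)
    (hs1 : 1 ≤ α1 + β1) (hs2 : 1 ≤ α2 + β2)
    (hw1 : 0 ≤ w1) (hw2 : 0 ≤ w2)
    (hp11 : p11 ∈ Set.Icc (0:ℝ) 1) (hp22 : p22 ∈ Set.Icc (0:ℝ) 1)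
    (hp112 : p112 ∈ Set.Icc (0:ℝ) 1) (hp221 : p221 ∈ Set.Icc (0:ℝ) 1)
    (hΓ1 : Γ1 ∈ Set.Ioc (0:ℝ) 1) (hΓ2 : Γ2 ∈ Set.Ioc (0:ℝ) 1)
    (q1 q2 : (Fin 3 → ℝ) → (Fin 3 → ℝ) → ℝ)
    (hq1 : ∀ a1 a2, q1 a1 a2 = a1 1 * a2 0 * p11 + a1 0 * a2 1 * p22
        + a1 1 * a2 1 * (1 - (1-p112)*(1-p221)) + a1 1 * a2 2 * p112 + a1 2 * a2 1 * p221)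
    (hq2 : ∀ a1 a2, q2 a1 a2 = a1 2 * a2 0 * p11 + a1 0 * a2 2 * p22
        + a1 2 * a2 2 * (1 - (1-p112)*(1-p221)) + a1 2 * a2 1 * p112 + a1 1 * a2 2 * p221)
    (E1 E2 : ℝ → ℝ)
    (hE1 : ∀ q, E1 q = 2*α1*β1*(1-q) / ((α1+β1) * ((α1+β1) - q*(α1+β1-1))))
    (hE2 : ∀ q, E2 q = 2*α2*β2*(1-q) / ((α2+β2) * ((α2+β2) - q*(α2+β2-1))))
    (E : (Fin 3 → ℝ) → (Fin 3 → ℝ) → ℝ)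
    (hE : ∀ a1 a2, E a1 a2 = w1 * E1 (q1 a1 a2) + w2 * E2 (q2 a1 a2))
    (P1 P2 : Set (Fin 3 → ℝ))
    (hP1 : P1 = {a : Fin 3 → ℝ | 0 ≤ a 0 ∧ 0 ≤ a 1 ∧ 0 ≤ a 2 ∧
                  a 0 + a 1 + a 2 = 1 ∧ a 1 + a 2 ≤ Γ1})
    (hP2 : P2 = {a : Fin 3 → ℝ | 0 ≤ a 0 ∧ 0 ≤ a 1 ∧ 0 ≤ a 2 ∧
                  a 0 + a 1 + a 2 = 1 ∧ a 1 + a 2 ≤ Γ2}) :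
    ∃ v1 ∈ ({![1,0,0], ![1-Γ1, Γ1, 0], ![1-Γ1, 0, Γ1]} : Set (Fin 3 → ℝ)),
    ∃ v2 ∈ ({![1,0,0], ![1-Γ2, Γ2, 0], ![1-Γ2, 0, Γ2]} : Set (Fin 3 → ℝ)),
      ∀ a1 ∈ P1, ∀ a2 ∈ P2, E v1 v2 ≤ E a1 a2 := by
  have hφ1 : ConcaveOn ℝ (Iic 1) E1 := funext hE1 ▸
    concaveOn_Iic_one_mul_one_sub_div (mul_pos (mul_pos two_pos hα1.1) hβ1.1).le hs1
  have hφ2 : ConcaveOn ℝ (Iic 1) E2 := funext hE2 ▸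
    concaveOn_Iic_one_mul_one_sub_div (mul_pos (mul_pos two_pos hα2.1) hβ2.1).le hs2
  have hM i j := updateMatrix_apply_le_one hp11.2 hp22.2 hp112.2 hp221.2 i j
  set M1 := updateMatrix₁ p11 p22 p112 p221
  set M2 := updateMatrix₂ p11 p22 p112 p221
  have hEq : E = fun a1 a2 => w1 * E1 (a1 ⬝ᵥ M1 *ᵥ a2) + w2 * E2 (a1 ⬝ᵥ M2 *ᵥ a2) := by
    ext a1 a2
    rw [hE, hq1, hq2, dotProduct_updateMatrix₁_mulVec, dotProduct_updateMatrix₂_mulVec]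
  have hV1 := convexHull_policyVertices_subset_stdSimplex (Ioc_subset_Icc_self hΓ1)
  have hV2 := convexHull_policyVertices_subset_stdSimplex (Ioc_subset_Icc_self hΓ2)
  subst hEq hP1 hP2
  obtain ⟨v1, hv1, v2, hv2, hmin⟩ := exists_le_of_concaveOn_convexHull_prod
    (((finite_singleton _).insert _).insert _) (((finite_singleton _).insert _).insert _)
    (insert_nonempty _ _) (insert_nonempty _ _)
    (fun a2 ha2 => (((hφ1.comp_dotProduct_mulVec_left (hM · · |>.1) (hV2 ha2)).smul hw1).add
      ((hφ2.comp_dotProduct_mulVec_left (hM · · |>.2) (hV2 ha2)).smul hw2)).subset hV1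
      (convex_convexHull ℝ _))
    (fun a1 ha1 => have ha1 := hV1 (subset_convexHull ℝ _ ha1)
      (((hφ1.comp_dotProduct_mulVec_right (hM · · |>.1) ha1).smul hw1).add
        ((hφ2.comp_dotProduct_mulVec_right (hM · · |>.2) ha1).smul hw2)).subset hV2
        (convex_convexHull ℝ _))
  exact ⟨v1, hv1, v2, hv2, fun a1 ha1 a2 ha2 =>
    hmin a1 (policySimplex_subset_convexHull hΓ1.1 ha1) a2
      (policySimplex_subset_convexHull hΓ2.1 ha2)⟩
end
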